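/- arXiv:2512.20096 — 3 statements merged into one kernel-verified Lean document; each statement's English description precedes it below -/
import Mathlib

section
/- (Regret bound for information-directed sampling.) In the discounted-cost framework with γ ∈ (0,1), let H : X → ℝ be bounded with H ≥ 0, define Θ(x) = H(x) − γ Σ_{i∈I} p(x,i) H(T(x,i)), and assume Θ(x) ≥ 0 for all x. Let α ∈ (0,1), Ψ ≥ 0, and let Δ : X → ℝ be bounded with 0 ≤ Δ(x) ≤ Ψ^α Θ(x)^{1−α} for all x ∈ X. Then the discounted cumulative cost of Δ satisfies C_Δ(x) ≤ (Ψ/(1−γ))^α · H(x)^{1−α} for every x ∈ X. -/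
/-!
The function `B x = (Ψ / (1 - γ)) ^ α * H x ^ (1 - α)` is a supersolution of the Bellman equation
for `Δ`. Indeed, splitting `H x = (1 - γ) • (Θ x / (1 - γ)) + γ • ∑ i, p x i • H (T x i)` into a
convex combination, concavity of `t ↦ t ^ (1 - α)` gives
`(1 - γ) (Θ x / (1 - γ)) ^ (1 - α) + γ ∑ i, p x i H (T x i) ^ (1 - α) ≤ H x ^ (1 - α)`, and after
multiplication by `(Ψ / (1 - γ)) ^ α` the first term becomes `Ψ ^ α Θ x ^ (1 - α) ≥ Δ x`.
A bounded solution lies below any supersolution `B` that is bounded below: if `M` bounds `C - B`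
from above then so does `γ M`, hence `C - B ≤ γ ^ n M → 0`.
-/

open Finset Filter

def Bdd {X : Type*} (f : X → ℝ) : Prop := ∃ M, ∀ x, |f x| ≤ M

/-- `C` is a (bounded) discounted cumulative cost for the one-step cost `f`. -/
def IsDCC {X I : Type*} [Fintype I] (p : X → I → ℝ) (T : X → I → X) (γ : ℝ)
    (f C : X → ℝ) : Prop :=
  Bdd C ∧ ∀ x, C x = f x + γ * ∑ i, p x i * C (T x i)

section Concavity

variable {ι : Type*} [Fintype ι] {w h : ι → ℝ} {γ : ℝ}

theorem ConcaveOn.discounted_split_le {φ : ℝ → ℝ} (hφ : ConcaveOn ℝ (Set.Ici 0) φ)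
    (hw0 : ∀ i, 0 ≤ w i) (hw1 : ∑ i, w i = 1) (hh : ∀ i, 0 ≤ h i)
    (hγ0 : 0 ≤ γ) (hγ1 : γ < 1) {a : ℝ} (ha : 0 ≤ a) :
    (1 - γ) * φ (a / (1 - γ)) + γ * ∑ i, w i * φ (h i) ≤ φ (a + γ * ∑ i, w i * h i) := by
  have h1γ : 0 < 1 - γ := by linarith
  have hjensen : ∑ i, w i * φ (h i) ≤ φ (∑ i, w i * h i) := by
    simpa only [smul_eq_mul] using
      hφ.le_map_sum (fun i _ => hw0 i) hw1 (fun i _ => Set.mem_Ici.2 (hh i))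
  have hmean : 0 ≤ ∑ i, w i * h i := sum_nonneg fun i _ => mul_nonneg (hw0 i) (hh i)
  have htwo := hφ.2 (Set.mem_Ici.2 (div_nonneg ha h1γ.le)) (Set.mem_Ici.2 hmean)
    h1γ.le hγ0 (sub_add_cancel 1 γ)
  simp only [smul_eq_mul, mul_div_cancel₀ a h1γ.ne'] at htwo
  linarith [mul_le_mul_of_nonneg_left hjensen hγ0]

theorem rpow_mul_rpow_one_sub_eq_div {α s Ψ a : ℝ} (hs : 0 < s) (hΨ : 0 ≤ Ψ) (ha : 0 ≤ a) :
    Ψ ^ α * a ^ (1 - α) = (Ψ / s) ^ α * (s * (a / s) ^ (1 - α)) := by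
  have hsplit : s ^ α * s ^ (1 - α) = s := by
    rw [← Real.rpow_add hs, add_sub_cancel, Real.rpow_one]
  rw [Real.div_rpow hΨ hs.le, Real.div_rpow ha hs.le]
  field_simp
  rw [mul_assoc, hsplit]

theorem add_discounted_rpow_le (hw0 : ∀ i, 0 ≤ w i) (hw1 : ∑ i, w i = 1) (hh : ∀ i, 0 ≤ h i)
    (hγ0 : 0 ≤ γ) (hγ1 : γ < 1) {α Ψ a d : ℝ} (hα0 : 0 ≤ α) (hα1 : α ≤ 1) (hΨ : 0 ≤ Ψ)
    (ha : 0 ≤ a) (hd : d ≤ Ψ ^ α * a ^ (1 - α)) :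
    d + γ * ∑ i, w i * ((Ψ / (1 - γ)) ^ α * h i ^ (1 - α)) ≤
      (Ψ / (1 - γ)) ^ α * (a + γ * ∑ i, w i * h i) ^ (1 - α) := by
  have h1γ : 0 < 1 - γ := by linarith
  have hc : 0 ≤ (Ψ / (1 - γ)) ^ α := Real.rpow_nonneg (div_nonneg hΨ h1γ.le) α
  have hconc := (Real.concaveOn_rpow (by linarith : 0 ≤ 1 - α) (by linarith : 1 - α ≤ 1))
    |>.discounted_split_le hw0 hw1 hh hγ0 hγ1 ha
  rw [rpow_mul_rpow_one_sub_eq_div h1γ hΨ ha] at hd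
  have hpull : γ * ∑ i, w i * ((Ψ / (1 - γ)) ^ α * h i ^ (1 - α)) =
      (Ψ / (1 - γ)) ^ α * (γ * ∑ i, w i * h i ^ (1 - α)) := by
    simp only [mul_sum]
    exact sum_congr rfl fun i _ => by ring
  rw [hpull]
  linarith [mul_le_mul_of_nonneg_left hconc hc]

end Concavity

section Comparison

variable {X I : Type*} [Fintype I] {p : X → I → ℝ} {T : X → I → X} {γ : ℝ}

theorem nonpos_of_le_discounted_average (hp0 : ∀ x i, 0 ≤ p x i) (hp1 : ∀ x, ∑ i, p x i = 1)
    (hγ0 : 0 ≤ γ) (hγ1 : γ < 1) {D : X → ℝ} {M : ℝ} (hM : ∀ x, D x ≤ M)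
    (hD : ∀ x, D x ≤ γ * ∑ i, p x i * D (T x i)) (x : X) : D x ≤ 0 := by
  have hiter : ∀ n : ℕ, ∀ x, D x ≤ γ ^ n * M := by
    intro n
    induction n with
    | zero => simpa using hM
    | succ n ih =>
      intro x
      have havg : ∑ i, p x i * D (T x i) ≤ γ ^ n * M := calc
        ∑ i, p x i * D (T x i) ≤ ∑ i, p x i * (γ ^ n * M) :=
          sum_le_sum fun i _ => mul_le_mul_of_nonneg_left (ih (T x i)) (hp0 x i)
        _ = γ ^ n * M := by rw [← sum_mul, hp1 x, one_mul]
      calc D x ≤ γ * ∑ i, p x i * D (T x i) := hD x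
        _ ≤ γ * (γ ^ n * M) := mul_le_mul_of_nonneg_left havg hγ0
        _ = γ ^ (n + 1) * M := by ring
  have hlim : Tendsto (fun n : ℕ => γ ^ n * M) atTop (nhds 0) := by
    simpa using (tendsto_pow_atTop_nhds_zero_of_lt_one hγ0 hγ1).mul_const M
  exact ge_of_tendsto' hlim fun n => hiter n x

theorem IsDCC.le_of_supersolution {f C B : X → ℝ} (hC : IsDCC p T γ f C)
    (hp0 : ∀ x i, 0 ≤ p x i) (hp1 : ∀ x, ∑ i, p x i = 1) (hγ0 : 0 ≤ γ) (hγ1 : γ < 1)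
    {m : ℝ} (hBm : ∀ x, m ≤ B x) (hB : ∀ x, f x + γ * ∑ i, p x i * B (T x i) ≤ B x)
    (x : X) : C x ≤ B x := by
  obtain ⟨⟨MC, hMC⟩, hCeq⟩ := hC
  have hbound : ∀ x, C x - B x ≤ MC - m := fun x => by
    linarith [(abs_le.1 (hMC x)).2, hBm x]
  have hstep : ∀ x, C x - B x ≤ γ * ∑ i, p x i * (C (T x i) - B (T x i)) := fun x => by
    simp only [mul_sub, sum_sub_distrib]
    linarith [hCeq x, hB x]
  linarith [nonpos_of_le_discounted_average hp0 hp1 hγ0 hγ1 hbound hstep x]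

end Comparison

theorem ids_regret_bound_general
    {X I : Type*} [Fintype I]
    (p : X → I → ℝ) (hp0 : ∀ x i, 0 ≤ p x i) (hp1 : ∀ x, ∑ i, p x i = 1)
    (T : X → I → X) (γ : ℝ) (hγ0 : 0 < γ) (hγ1 : γ < 1)
    (H : X → ℝ) (hH0 : ∀ x, 0 ≤ H x)
    (hΘ0 : ∀ x, 0 ≤ H x - γ * ∑ i, p x i * H (T x i))
    (α : ℝ) (hα0 : 0 < α) (hα1 : α < 1)
    (Ψ : ℝ) (hΨ : 0 ≤ Ψ)
    (Δ : X → ℝ)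
    (hΔΘ : ∀ x, Δ x ≤ Ψ ^ α * (H x - γ * ∑ i, p x i * H (T x i)) ^ (1 - α))
    (CΔ : X → ℝ) (hCΔ : IsDCC p T γ Δ CΔ) :
    ∀ x, CΔ x ≤ (Ψ / (1 - γ)) ^ α * H x ^ (1 - α) := by
  have hB0 : ∀ x, 0 ≤ (Ψ / (1 - γ)) ^ α * H x ^ (1 - α) := fun x =>
    mul_nonneg (Real.rpow_nonneg (div_nonneg hΨ (by linarith)) α) (Real.rpow_nonneg (hH0 x) _)
  refine hCΔ.le_of_supersolution hp0 hp1 hγ0.le hγ1 hB0 fun x => ?_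
  simpa only [sub_add_cancel] using add_discounted_rpow_le (hp0 x) (hp1 x) (fun i => hH0 (T x i))
    hγ0.le hγ1 hα0.le hα1.le hΨ (hΘ0 x) (hΔΘ x)

/-- Regret bound for information-directed sampling. -/
theorem ids_regret_bound
    {X I : Type*} [Fintype I]
    (p : X → I → ℝ) (hp0 : ∀ x i, 0 ≤ p x i) (hp1 : ∀ x, ∑ i, p x i = 1)
    (T : X → I → X) (γ : ℝ) (hγ0 : 0 < γ) (hγ1 : γ < 1)
    (H : X → ℝ) (hH : Bdd H) (hH0 : ∀ x, 0 ≤ H x)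
    (hΘ0 : ∀ x, 0 ≤ H x - γ * ∑ i, p x i * H (T x i))
    (α : ℝ) (hα0 : 0 < α) (hα1 : α < 1)
    (Ψ : ℝ) (hΨ : 0 ≤ Ψ)
    (Δ : X → ℝ) (hΔbdd : Bdd Δ) (hΔ0 : ∀ x, 0 ≤ Δ x)
    (hΔΘ : ∀ x, Δ x ≤ Ψ ^ α * (H x - γ * ∑ i, p x i * H (T x i)) ^ (1 - α))
    (CΔ : X → ℝ) (hCΔ : IsDCC p T γ Δ CΔ) :
    ∀ x, CΔ x ≤ (Ψ / (1 - γ)) ^ α * H x ^ (1 - α) :=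
  ids_regret_bound_general p hp0 hp1 T γ hγ0 hγ1 H hH0 hΘ0 α hα0 hα1 Ψ hΨ Δ hΔΘ CΔ hCΔ
end

section
/- (Matching condition in the symmetric case.) Let θ ∈ (1/2,1), γ ∈ (0,1), D = 1 − 4γ²θ(1−θ), ζ_− = ln((1 − √D)/(2γθ)) / ln((1−θ)/θ), and C = γ(2θ−1)² / ((1−γ)√D). Then the function v(β) = (1 + β(2θ−1))/(2(1−γ)) + C ((1−β)/2)^{ζ_−} ((1+β)/2)^{1−ζ_−} satisfies the matching condition at the decision boundary β = 0 of the symmetric bandit: v(0) = 1/2 + γ v(2θ−1). -/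
/-!
Matching condition in the symmetric two-state Bernoulli bandit.  With
`D = 1 − 4γ²θ(1−θ)`, `ζ_− = ln((1 − √D)/(2γθ)) / ln((1−θ)/θ)` and
`C = γ(2θ−1)² / ((1−γ)√D)`, the candidate optimal value
`v(β) = (1 + β(2θ−1))/(2(1−γ)) + C ((1−β)/2)^{ζ_−} ((1+β)/2)^{1−ζ_−}`
satisfies the matching condition at the decision boundary `β = 0`:
`v(0) = 1/2 + γ v(2θ−1)`.
-/

/-- The discriminant `D = 1 − 4γ²θ(1−θ)`. -/
noncomputable def Dq (θ γ : ℝ) : ℝ := 1 - 4 * γ ^ 2 * θ * (1 - θ)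

/-- The exponent `ζ_− = ln((1 − √D)/(2γθ)) / ln((1−θ)/θ)`. -/
noncomputable def zetaMinus (θ γ : ℝ) : ℝ :=
  Real.log ((1 - Real.sqrt (Dq θ γ)) / (2 * γ * θ)) / Real.log ((1 - θ) / θ)

/-- The ansatz value function
`v(β) = (1 + β(2θ−1))/(2(1−γ)) + C ((1−β)/2)^ζ ((1+β)/2)^{1−ζ}`. -/
noncomputable def vSol (θ γ ζ C β : ℝ) : ℝ :=
  (1 + β * (2 * θ - 1)) / (2 * (1 - γ))
    + C * ((1 - β) / 2) ^ ζ * ((1 + β) / 2) ^ (1 - ζ)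

/-!
Since `ζ_−` is the logarithm of `(1 − √D)/(2γθ)` to the base `(1−θ)/θ`, the singular term of
`v(2θ−1)` is `C θ^{1−ζ_−} (1−θ)^{ζ_−} = C (1 − √D)/(2γ)`, while at `β = 0` it is `C/2`. The
matching condition then reduces to `C √D / 2 = γ(2θ−1)²/(2(1−γ))`, which is the choice of `C`.
-/

theorem rpow_mul_rpow_one_sub_eq {a b : ℝ} (ha : 0 ≤ a) (hb : 0 < b) (ζ : ℝ) :
    a ^ ζ * b ^ (1 - ζ) = b * (a / b) ^ ζ := by
  rw [Real.rpow_sub hb, Real.rpow_one, Real.div_rpow ha hb.le]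
  field_simp

-- `Dq θ γ = 1 - γ² + γ²(2θ - 1)²`
theorem Dq_pos (θ : ℝ) {γ : ℝ} (hγ : |γ| < 1) : 0 < Dq θ γ := by
  have hγ2 : γ ^ 2 < 1 := (sq_lt_one_iff_abs_lt_one γ).2 hγ
  unfold Dq
  nlinarith [mul_nonneg (sq_nonneg γ) (sq_nonneg (2 * θ - 1))]

theorem Dq_lt_one {θ γ : ℝ} (hθ : θ ∈ Set.Ioo (0 : ℝ) 1) (hγ : γ ≠ 0) : Dq θ γ < 1 := by
  have : 0 < γ ^ 2 * (θ * (1 - θ)) := mul_pos (by positivity) (by nlinarith [hθ.1, hθ.2])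
  unfold Dq
  linarith

theorem rpow_zetaMinus {θ γ : ℝ} (hθ : θ ∈ Set.Ioo (0 : ℝ) 1) (hθ_half : θ ≠ 1 / 2)
    (hγ : 0 < γ) :
    ((1 - θ) / θ) ^ zetaMinus θ γ = (1 - Real.sqrt (Dq θ γ)) / (2 * γ * θ) := by
  obtain ⟨hθ0, hθ1⟩ := hθ
  have hsqrt : Real.sqrt (Dq θ γ) < 1 :=
    (Real.sqrt_lt' one_pos).2 (by simpa using Dq_lt_one ⟨hθ0, hθ1⟩ hγ.ne')
  have hx : 0 < (1 - Real.sqrt (Dq θ γ)) / (2 * γ * θ) := div_pos (by linarith) (by positivity)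
  have hb_ne_one : (1 - θ) / θ ≠ 1 := by
    rw [Ne, div_eq_one_iff_eq hθ0.ne']
    contrapose! hθ_half
    linarith
  exact Real.rpow_logb (div_pos (by linarith) hθ0) hb_ne_one hx

theorem vSol_zero (θ γ ζ C : ℝ) : vSol θ γ ζ C 0 = 1 / (2 * (1 - γ)) + C / 2 := by
  have h := rpow_mul_rpow_one_sub_eq (a := 1 / 2) (b := 1 / 2) (by norm_num) (by norm_num) ζ
  unfold vSol
  norm_num at h ⊢
  rw [mul_assoc, h]
  ring

theorem vSol_two_mul_sub_one {θ : ℝ} (hθ : θ ∈ Set.Ioo (0 : ℝ) 1) (γ ζ C : ℝ) :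
    vSol θ γ ζ C (2 * θ - 1)
      = (1 + (2 * θ - 1) ^ 2) / (2 * (1 - γ)) + C * θ * ((1 - θ) / θ) ^ ζ := by
  have h := rpow_mul_rpow_one_sub_eq (sub_nonneg.2 hθ.2.le) hθ.1 ζ
  unfold vSol
  rw [show (1 - (2 * θ - 1)) / 2 = 1 - θ by ring, show (1 + (2 * θ - 1)) / 2 = θ by ring,
    mul_assoc, h, ← mul_assoc, sq]

theorem symmetric_matching_condition
    (θ γ : ℝ) (hθ : θ ∈ Set.Ioo (1 / 2 : ℝ) 1) (hγ : γ ∈ Set.Ioo (0 : ℝ) 1) :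
    vSol θ γ (zetaMinus θ γ)
        (γ * (2 * θ - 1) ^ 2 / ((1 - γ) * Real.sqrt (Dq θ γ))) 0
      = 1 / 2
        + γ * vSol θ γ (zetaMinus θ γ)
            (γ * (2 * θ - 1) ^ 2 / ((1 - γ) * Real.sqrt (Dq θ γ))) (2 * θ - 1) := by
  obtain ⟨hθ_half, hθ1⟩ := hθ
  obtain ⟨hγ0, hγ1⟩ := hγ
  have hθ' : θ ∈ Set.Ioo (0 : ℝ) 1 := ⟨by linarith, hθ1⟩
  have hsqrt : Real.sqrt (Dq θ γ) ≠ 0 :=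
    (Real.sqrt_pos.2 (Dq_pos θ (abs_lt.2 ⟨by linarith, hγ1⟩))).ne'
  rw [vSol_zero, vSol_two_mul_sub_one hθ',
    rpow_zetaMinus hθ' hθ_half.ne' hγ0]
  have : 1 - γ ≠ 0 := by linarith
  field_simp
  ring
end

section
/- Fix θ ∈ (1/2,1). For γ ∈ (0,1) let D = 1 − 4γ²θ(1−θ) and ζ_−(γ) = ln((1 − √D)/(2γθ)) / ln((1−θ)/θ). Then ζ_−(γ) → 1 as γ → 1⁻, and more precisely lim_{γ→1⁻} (ζ_−(γ) − 1)/(1−γ) = 1 / ((2θ−1) ln(θ/(1−θ))). -/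
open Filter Topology

theorem HasDerivAt.tendsto_sub_div_sub_nhdsLT {f : ℝ → ℝ} {f' a : ℝ} (hf : HasDerivAt f f' a) :
    Tendsto (fun x => (f x - f a) / (a - x)) (𝓝[<] a) (𝓝 (-f')) := by
  have hslope := (hasDerivAt_iff_tendsto_slope.mp hf).mono_left
    (nhdsWithin_mono a fun x (hx : x < a) => hx.ne)
  refine hslope.neg.congr fun x => ?_
  rw [slope_def_field, ← neg_sub x a, div_neg]

theorem Dq_one (θ : ℝ) : Dq θ 1 = (2 * θ - 1) ^ 2 := by
  unfold Dq; ring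

theorem sqrt_Dq_one {θ : ℝ} (hθ : 1 / 2 ≤ θ) : Real.sqrt (Dq θ 1) = 2 * θ - 1 := by
  rw [Dq_one, Real.sqrt_sq (by linarith)]

theorem hasDerivAt_sqrt_Dq_one {θ : ℝ} (hθ : 1 / 2 < θ) :
    HasDerivAt (fun γ => Real.sqrt (Dq θ γ)) (-(4 * θ * (1 - θ)) / (2 * θ - 1)) 1 := by
  have hD : HasDerivAt (Dq θ) (-(8 * θ * (1 - θ))) 1 :=
    ((((hasDerivAt_pow 2 (1 : ℝ)).const_mul 4).mul_const θ).mul_const (1 - θ)).const_sub 1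
      |>.congr_deriv (by norm_num)
  have hpos : 0 < 2 * θ - 1 := by linarith
  refine ((Real.hasDerivAt_sqrt (by rw [Dq_one]; positivity)).comp 1 hD).congr_deriv ?_
  rw [sqrt_Dq_one hθ.le]
  field_simp
  ring

theorem root_one {θ : ℝ} (hθ : 1 / 2 ≤ θ) :
    (1 - Real.sqrt (Dq θ 1)) / (2 * 1 * θ) = (1 - θ) / θ := by
  rw [sqrt_Dq_one hθ]; field_simp; ring

theorem hasDerivAt_root_one {θ : ℝ} (hθ : 1 / 2 < θ) :
    HasDerivAt (fun γ => (1 - Real.sqrt (Dq θ γ)) / (2 * γ * θ))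
      ((1 - θ) / (θ * (2 * θ - 1))) 1 := by
  have hθ₀ : θ ≠ 0 := by linarith
  have h2θ : 2 * θ - 1 ≠ 0 := by linarith
  have hden : HasDerivAt (fun γ : ℝ => 2 * γ * θ) (2 * θ) 1 := by
    simpa using ((hasDerivAt_id (1 : ℝ)).const_mul 2).mul_const θ
  refine (((hasDerivAt_sqrt_Dq_one hθ).const_sub 1).fun_div hden
    (by simpa using hθ₀)).congr_deriv ?_
  rw [sqrt_Dq_one hθ.le, div_eq_div_iff (by positivity) (by positivity), neg_div, neg_neg,
    div_mul_eq_mul_div, div_sub' h2θ, div_mul_eq_mul_div, div_eq_iff h2θ]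
  ring

theorem hasDerivAt_log_root_one {θ : ℝ} (hθ : θ ∈ Set.Ioo (1 / 2 : ℝ) 1) :
    HasDerivAt (fun γ => Real.log ((1 - Real.sqrt (Dq θ γ)) / (2 * γ * θ)))
      (1 / (2 * θ - 1)) 1 := by
  obtain ⟨hθ₁, hθ₂⟩ := hθ
  have hθ₀ : θ ≠ 0 := by linarith
  have h1θ : 1 - θ ≠ 0 := by linarith
  have h2θ : 2 * θ - 1 ≠ 0 := by linarith
  refine ((hasDerivAt_root_one hθ₁).log ?_).congr_deriv ?_
  · rw [root_one hθ₁.le]; exact div_ne_zero h1θ hθ₀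
  · rw [root_one hθ₁.le]; field_simp

theorem zetaMinus_one {θ : ℝ} (hθ : θ ∈ Set.Ioo (1 / 2 : ℝ) 1) : zetaMinus θ 1 = 1 := by
  obtain ⟨hθ₁, hθ₂⟩ := hθ
  have hL : Real.log ((1 - θ) / θ) ≠ 0 :=
    (Real.log_neg (by apply div_pos <;> linarith) (by rw [div_lt_one] <;> linarith)).ne
  unfold zetaMinus
  rw [root_one hθ₁.le]
  exact div_self hL

theorem zeta_minus_asymptotics
    (θ : ℝ) (hθ : θ ∈ Set.Ioo (1 / 2 : ℝ) 1) :
    Filter.Tendsto (fun γ => zetaMinus θ γ)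
        (nhdsWithin 1 (Set.Iio (1 : ℝ))) (nhds 1) ∧
      Filter.Tendsto (fun γ => (zetaMinus θ γ - 1) / (1 - γ))
        (nhdsWithin 1 (Set.Iio (1 : ℝ)))
        (nhds (1 / ((2 * θ - 1) * Real.log (θ / (1 - θ))))) := by
  have hderiv : HasDerivAt (zetaMinus θ) (1 / (2 * θ - 1) / Real.log ((1 - θ) / θ)) 1 :=
    (hasDerivAt_log_root_one hθ).div_const _
  have hlog_inv : Real.log (θ / (1 - θ)) = -Real.log ((1 - θ) / θ) := by
    rw [← Real.log_inv, inv_div]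
  constructor
  · simpa [zetaMinus_one hθ] using hderiv.continuousAt.tendsto.mono_left nhdsWithin_le_nhds
  · convert hderiv.tendsto_sub_div_sub_nhdsLT using 2
    · rw [zetaMinus_one hθ]
    · rw [hlog_inv, mul_neg, div_neg, div_div]
end
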